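/- For every x ∈ ℝ^n and every p > 0, the norm ‖x‖_{{1},p} satisfies the two-sided comparison ‖x‖_{{1},p} ≤ Σ_{i≤p} x_i↓ + √p (Σ_{i>p} (x_i↓)²)^{1/2} ≤ 2 ‖x‖_{{1},p}, and moreover max( Σ_{i≤p} x_i↓ , √p (Σ_{i>p} (x_i↓)²)^{1/2} ) ≤ ‖x‖_{{1},p}, where (x_i↓)_{i≤n} denotes the nonincreasing rearrangement of (|x_i|)_{i≤n} and sums over i ≤ p (resp. i > p) run over indices i with i ≤ p (resp. i > p). -/
import Mathlib


open MeasureTheory Finset Real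

noncomputable section

/-- The norm `‖x‖_{{1},p} = sup { Σ x_i y_i : |y|₂ ≤ √p, |y|_∞ ≤ 1 }`. -/
def norm1p {n : ℕ} (p : ℝ) (x : Fin n → ℝ) : ℝ :=
  sSup { r : ℝ | ∃ y : Fin n → ℝ, (∑ i, (y i)^2 ≤ p) ∧ (∀ i, |y i| ≤ 1) ∧
    r = ∑ i, x i * y i }

end

lemma aux_mul_sign (t : ℝ) : t * Real.sign t = |t| := by
  rcases lt_trichotomy t 0 with h | h | h
  · rw [Real.sign_of_neg h, abs_of_neg h]; ring
  · simp [h]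
  · rw [Real.sign_of_pos h, abs_of_pos h]; ring

lemma aux_abs_sign (t : ℝ) : |Real.sign t| ≤ 1 := by
  rcases Real.sign_apply_eq t with h | h | h <;> rw [h] <;> norm_num

/-- two-sided comparison of `‖x‖_{{1},p}` with
`Σ_{i ≤ p} x_i↓ + √p (Σ_{i>p} (x_i↓)²)^{1/2}`, where `y = (x_i↓)` is the nonincreasing
rearrangement of `(|x_i|)` (indices counted from `1`). -/
theorem norm1p_two_sided_comparison (n : ℕ) (p : ℝ) (hp : 0 < p)
    (x y : Fin n → ℝ)
    (hperm : ∃ e : Equiv.Perm (Fin n), ∀ i, y i = |x (e i)|)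
    (hanti : ∀ i j : Fin n, i ≤ j → y j ≤ y i) :
    norm1p p x ≤
      (∑ i ∈ Finset.univ.filter (fun i : Fin n => ((i : ℕ) + 1 : ℝ) ≤ p), y i) +
        Real.sqrt p * Real.sqrt
          (∑ i ∈ Finset.univ.filter (fun i : Fin n => p < ((i : ℕ) + 1 : ℝ)), (y i)^2) ∧
    (∑ i ∈ Finset.univ.filter (fun i : Fin n => ((i : ℕ) + 1 : ℝ) ≤ p), y i) +
        Real.sqrt p * Real.sqrt
          (∑ i ∈ Finset.univ.filter (fun i : Fin n => p < ((i : ℕ) + 1 : ℝ)), (y i)^2) ≤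
      2 * norm1p p x ∧
    max (∑ i ∈ Finset.univ.filter (fun i : Fin n => ((i : ℕ) + 1 : ℝ) ≤ p), y i)
        (Real.sqrt p * Real.sqrt
          (∑ i ∈ Finset.univ.filter (fun i : Fin n => p < ((i : ℕ) + 1 : ℝ)), (y i)^2)) ≤
      norm1p p x := by
  obtain ⟨e, he⟩ := hperm
  set A : Finset (Fin n) := Finset.univ.filter (fun i : Fin n => ((i : ℕ) + 1 : ℝ) ≤ p)
    with hA
  set B : Finset (Fin n) := Finset.univ.filter (fun i : Fin n => p < ((i : ℕ) + 1 : ℝ))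
    with hB
  have hy0 : ∀ i, 0 ≤ y i := fun i => (he i) ▸ abs_nonneg _
  set S : ℝ := ∑ i ∈ A, y i with hS
  set Q : ℝ := ∑ i ∈ B, (y i)^2 with hQ
  set T : ℝ := Real.sqrt p * Real.sqrt Q with hT
  have hQ0 : 0 ≤ Q := Finset.sum_nonneg fun i _ => sq_nonneg _
  -- B is the complement filter of A
  have hBcompl : B = Finset.univ.filter (fun i : Fin n => ¬ (((i : ℕ) + 1 : ℝ) ≤ p)) := by
    ext i; simp [hB, not_le]
  -- key upper bound for any feasible v
  have key : ∀ v : Fin n → ℝ, (∑ i, (v i)^2 ≤ p) → (∀ i, |v i| ≤ 1) →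
      ∑ i, y i * v i ≤ S + T := by
    intro v hv2 hvi
    have hsplit : ∑ i, y i * v i = ∑ i ∈ A, y i * v i + ∑ i ∈ B, y i * v i := by
      rw [hBcompl, hA, Finset.sum_filter_add_sum_filter_not]
    have h1 : ∑ i ∈ A, y i * v i ≤ S := by
      apply Finset.sum_le_sum
      intro i _
      exact mul_le_of_le_one_right (hy0 i) ((le_abs_self _).trans (hvi i))
    have h2 : ∑ i ∈ B, y i * v i ≤ T := by
      calc ∑ i ∈ B, y i * v i
          ≤ Real.sqrt (∑ i ∈ B, (y i)^2) * Real.sqrt (∑ i ∈ B, (v i)^2) :=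
            Real.sum_mul_le_sqrt_mul_sqrt _ _ _
        _ ≤ Real.sqrt Q * Real.sqrt p := by
            apply mul_le_mul_of_nonneg_left _ (Real.sqrt_nonneg _)
            apply Real.sqrt_le_sqrt
            calc ∑ i ∈ B, (v i)^2 ≤ ∑ i, (v i)^2 :=
                  Finset.sum_le_sum_of_subset_of_nonneg (Finset.subset_univ _)
                    (fun i _ _ => sq_nonneg _)
              _ ≤ p := hv2
        _ = T := by rw [hT, mul_comm]
    linarith
  -- upper bound on every element of the defining set
  have upp : ∀ r ∈ { r : ℝ | ∃ w : Fin n → ℝ, (∑ i, (w i)^2 ≤ p) ∧ (∀ i, |w i| ≤ 1) ∧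
      r = ∑ i, x i * w i }, r ≤ S + T := by
    rintro r ⟨w, hw2, hwi, rfl⟩
    have h1 : ∑ i, x i * w i = ∑ i, x (e i) * w (e i) :=
      (Equiv.sum_comp e fun j => x j * w j).symm
    have h2 : ∑ i, x (e i) * w (e i) ≤ ∑ i, y i * |w (e i)| := by
      apply Finset.sum_le_sum
      intro i _
      calc x (e i) * w (e i) ≤ |x (e i) * w (e i)| := le_abs_self _
        _ = y i * |w (e i)| := by rw [abs_mul, he i]
    have h3 : ∑ i, y i * |w (e i)| ≤ S + T := by
      apply key
      · calc ∑ i, |w (e i)|^2 = ∑ i, (w (e i))^2 := by simp [sq_abs]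
          _ = ∑ i, (w i)^2 := Equiv.sum_comp e fun j => (w j)^2
          _ ≤ p := hw2
      · intro i; rw [abs_abs]; exact hwi (e i)
    linarith [h1 ▸ h2.trans h3]
  have hzero : (0:ℝ) ∈ { r : ℝ | ∃ w : Fin n → ℝ, (∑ i, (w i)^2 ≤ p) ∧ (∀ i, |w i| ≤ 1) ∧
      r = ∑ i, x i * w i } := ⟨0, by simpa using hp.le, fun i => by norm_num, by simp⟩
  have hbdd : BddAbove { r : ℝ | ∃ w : Fin n → ℝ, (∑ i, (w i)^2 ≤ p) ∧ (∀ i, |w i| ≤ 1) ∧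
      r = ∑ i, x i * w i } := ⟨S + T, upp⟩
  have hUB : norm1p p x ≤ S + T := csSup_le ⟨0, hzero⟩ upp
  -- membership lemma: any feasible v (in rearranged coordinates) gives a lower bound
  have memv : ∀ v : Fin n → ℝ, (∑ i, (v i)^2 ≤ p) → (∀ i, |v i| ≤ 1) →
      ∑ i, y i * v i ≤ norm1p p x := by
    intro v hv2 hvi
    apply le_csSup hbdd
    refine ⟨fun j => Real.sign (x j) * v (e.symm j), ?_, ?_, ?_⟩
    · calc ∑ j, (Real.sign (x j) * v (e.symm j))^2
          ≤ ∑ j, (v (e.symm j))^2 := by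
            apply Finset.sum_le_sum
            intro j _
            rw [mul_pow]
            have h1 : (Real.sign (x j))^2 ≤ 1 := by
              have := aux_abs_sign (x j)
              nlinarith [abs_nonneg (Real.sign (x j)), sq_abs (Real.sign (x j))]
            nlinarith [sq_nonneg (v (e.symm j))]
        _ = ∑ j, (v j)^2 := Equiv.sum_comp e.symm fun j => (v j)^2
        _ ≤ p := hv2
    · intro j
      rw [abs_mul]
      exact mul_le_one₀ (aux_abs_sign _) (abs_nonneg _) (hvi _)
    · calc ∑ i, y i * v i = ∑ i, |x (e i)| * v (e.symm (e i)) := by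
            simp [he]
        _ = ∑ j, |x j| * v (e.symm j) := Equiv.sum_comp e fun j => |x j| * v (e.symm j)
        _ = ∑ j, x j * (Real.sign (x j) * v (e.symm j)) := by
            apply Finset.sum_congr rfl
            intro j _
            rw [← mul_assoc, aux_mul_sign]
  -- the cardinality of A is at most p
  have hcardA : (A.card : ℝ) ≤ p := by
    have h1 : A.card ≤ Nat.floor p := by
      have : ∀ i ∈ A, (i : ℕ) ∈ Finset.range (Nat.floor p) := by
        intro i hi
        rw [hA, Finset.mem_filter] at hi
        rw [Finset.mem_range]
        have : ((i : ℕ) + 1 : ℕ) ≤ Nat.floor p := by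
          apply Nat.le_floor
          push_cast
          exact hi.2
        omega
      calc A.card ≤ (Finset.range (Nat.floor p)).card :=
          Finset.card_le_card_of_injOn (fun i => (i : ℕ)) this
            (fun a _ b _ hab => Fin.ext hab)
        _ = Nat.floor p := Finset.card_range _
    calc (A.card : ℝ) ≤ (Nat.floor p : ℝ) := by exact_mod_cast h1
      _ ≤ p := Nat.floor_le hp.le
  -- S ≤ norm1p
  have hSle : S ≤ norm1p p x := by
    have := memv (fun i => if ((i : ℕ) + 1 : ℝ) ≤ p then (1:ℝ) else 0) ?_ ?_
    · refine le_trans (le_of_eq ?_) this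
      rw [hS, hA, Finset.sum_filter]
      apply Finset.sum_congr rfl
      intro i _
      by_cases h : ((i : ℕ) + 1 : ℝ) ≤ p <;> simp [h]
    · have : ∑ i : Fin n, (if ((i : ℕ) + 1 : ℝ) ≤ p then (1:ℝ) else 0)^2
          = (A.card : ℝ) := by
        rw [hA, Finset.card_filter]
        push_cast
        apply Finset.sum_congr rfl
        intro i _
        by_cases h : ((i : ℕ) + 1 : ℝ) ≤ p <;> simp [h]
      rw [this]; exact hcardA
    · intro i; by_cases h : ((i : ℕ) + 1 : ℝ) ≤ p <;> simp [h]
  -- T ≤ norm1p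
  have hTle : T ≤ norm1p p x := by
    rcases eq_or_lt_of_le hQ0 with hQz | hQpos
    · have : T = 0 := by rw [hT, ← hQz, Real.sqrt_zero, mul_zero]
      rw [this]
      have := memv 0 (by simpa using hp.le) (fun i => by norm_num)
      simpa using this
    · have hBne : B.Nonempty := by
        rw [Finset.nonempty_iff_ne_empty]
        intro h
        rw [hQ, h, Finset.sum_empty] at hQpos
        exact lt_irrefl _ hQpos
      set m : Fin n := B.min' hBne with hm
      have hmB : m ∈ B := Finset.min'_mem _ _
      have hmle : ∀ i ∈ B, y i ≤ y m := fun i hi => hanti m i (Finset.min'_le _ _ hi)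
      have hNpos : 0 < Real.sqrt Q := Real.sqrt_pos.mpr hQpos
      set N : ℝ := Real.sqrt Q with hN
      have hN2 : N^2 = Q := Real.sq_sqrt hQ0
      by_cases hc : Real.sqrt p * y m ≤ N
      · -- case 1: proportional vector is feasible
        set v : Fin n → ℝ := fun i => if i ∈ B then Real.sqrt p * y i / N else 0 with hv
        have hvnn : ∀ i, 0 ≤ v i := by
          intro i
          rw [hv]
          by_cases h : i ∈ B <;> simp [h]
          exact div_nonneg (mul_nonneg (Real.sqrt_nonneg _) (hy0 i)) hNpos.le
        have hvle : ∀ i, |v i| ≤ 1 := by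
          intro i
          rw [abs_of_nonneg (hvnn i), hv]
          by_cases h : i ∈ B <;> simp [h]
          rw [div_le_one hNpos]
          calc Real.sqrt p * y i ≤ Real.sqrt p * y m :=
              mul_le_mul_of_nonneg_left (hmle i h) (Real.sqrt_nonneg _)
            _ ≤ N := hc
        have hstep : ∑ i, (v i)^2 = ∑ i ∈ B, (Real.sqrt p * y i / N)^2 := by
          calc ∑ i, (v i)^2
              = ∑ i, (if i ∈ B then (Real.sqrt p * y i / N)^2 else 0) := by
                apply Finset.sum_congr rfl
                intro i _
                rw [hv]
                by_cases h : i ∈ B <;> simp [h]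
            _ = ∑ i ∈ B, (Real.sqrt p * y i / N)^2 := by
                rw [Finset.sum_ite_mem, Finset.univ_inter]
        have hv2 : ∑ i, (v i)^2 ≤ p := by
          rw [hstep]
          have h1 : ∀ i ∈ B, (Real.sqrt p * y i / N)^2 = p / Q * (y i)^2 := by
            intro i _
            rw [div_pow, mul_pow, Real.sq_sqrt hp.le, hN2]
            ring
          rw [Finset.sum_congr rfl h1, ← Finset.mul_sum, ← hQ]
          rw [div_mul_cancel₀ _ (ne_of_gt hQpos)]
        have hval : ∑ i, y i * v i = T := by
          calc ∑ i, y i * v i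
              = ∑ i, (if i ∈ B then y i * (Real.sqrt p * y i / N) else 0) := by
                apply Finset.sum_congr rfl
                intro i _
                rw [hv]
                by_cases h : i ∈ B <;> simp [h]
            _ = ∑ i ∈ B, y i * (Real.sqrt p * y i / N) := by
                rw [Finset.sum_ite_mem, Finset.univ_inter]
            _ = ∑ i ∈ B, Real.sqrt p / N * (y i)^2 := by
                apply Finset.sum_congr rfl
                intro i _
                ring
            _ = Real.sqrt p / N * Q := by rw [← Finset.mul_sum, hQ]
            _ = Real.sqrt p * N := by
                rw [← hN2]
                field_simp
        rw [← hval]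
        exact memv v hv2 hvle
      · -- case 2: flat vector on an initial segment
        push_neg at hc
        set k : ℝ := ((m : ℕ) : ℝ) + 1 with hk
        have hkpos : (0:ℝ) < k := by positivity
        have hpk' : p < k := by
          rw [hB, Finset.mem_filter] at hmB
          exact hmB.2
        set c : ℝ := Real.sqrt (p / k) with hcdef
        have hcnn : 0 ≤ c := Real.sqrt_nonneg _
        have hc2 : c^2 = p / k := Real.sq_sqrt (by positivity)
        have hcle1 : c ≤ 1 := by
          have hle : p / k ≤ 1 := by
            rw [div_le_one hkpos]
            exact hpk'.le
          calc c = Real.sqrt (p / k) := hcdef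
            _ ≤ Real.sqrt 1 := Real.sqrt_le_sqrt hle
            _ = 1 := Real.sqrt_one
        have hpkc : p ≤ k * c := by
          have h1 : (k * c)^2 = p * k := by
            rw [mul_pow, hc2]
            field_simp
          nlinarith [mul_nonneg hkpos.le hcnn]
        set F : Finset (Fin n) := Finset.univ.filter (fun i => i ≤ m) with hF
        have hFI : F = Finset.Iic m := by ext i; simp [hF]
        have hcardF : ((F.card : ℕ) : ℝ) = k := by
          rw [hFI, Fin.card_Iic, hk]
          push_cast
          ring
        set v : Fin n → ℝ := fun i => if i ≤ m then c else 0 with hv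
        have hv2 : ∑ i, (v i)^2 ≤ p := by
          have : ∑ i, (v i)^2 = ∑ i ∈ F, c^2 := by
            calc ∑ i, (v i)^2 = ∑ i, (if i ≤ m then c^2 else 0) := by
                  apply Finset.sum_congr rfl
                  intro i _
                  rw [hv]
                  by_cases h : i ≤ m <;> simp [h]
              _ = ∑ i ∈ F, c^2 := by rw [hF, Finset.sum_filter]
          rw [this, Finset.sum_const, nsmul_eq_mul, hcardF, hc2]
          rw [mul_div_cancel₀ _ (ne_of_gt hkpos)]
        have hvle : ∀ i, |v i| ≤ 1 := by
          intro i
          rw [hv]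
          by_cases h : i ≤ m <;> simp [h]
          rw [abs_of_nonneg hcnn]
          exact hcle1
        have hlow : k * (y m * c) ≤ ∑ i, y i * v i := by
          have h1 : ∑ i, y i * v i = ∑ i ∈ F, y i * c := by
            calc ∑ i, y i * v i = ∑ i, (if i ≤ m then y i * c else 0) := by
                  apply Finset.sum_congr rfl
                  intro i _
                  rw [hv]
                  by_cases h : i ≤ m <;> simp [h]
              _ = ∑ i ∈ F, y i * c := by rw [hF, Finset.sum_filter]
          rw [h1]
          calc k * (y m * c) = ((F.card : ℕ) : ℝ) * (y m * c) := by rw [hcardF]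
            _ = ∑ _i ∈ F, y m * c := by rw [Finset.sum_const, nsmul_eq_mul]
            _ ≤ ∑ i ∈ F, y i * c := by
                apply Finset.sum_le_sum
                intro i hi
                rw [hF, Finset.mem_filter] at hi
                exact mul_le_mul_of_nonneg_right (hanti i m hi.2) hcnn
        have hTk : T ≤ k * (y m * c) := by
          have h1 : T ≤ Real.sqrt p * (Real.sqrt p * y m) := by
            rw [hT]
            exact mul_le_mul_of_nonneg_left hc.le (Real.sqrt_nonneg _)
          have h2 : Real.sqrt p * (Real.sqrt p * y m) = p * y m := by
            rw [← mul_assoc, Real.mul_self_sqrt hp.le]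
          have h3 : p * y m ≤ (k * c) * y m :=
            mul_le_mul_of_nonneg_right hpkc (hy0 m)
          calc T ≤ p * y m := by rw [← h2]; exact h1
            _ ≤ (k * c) * y m := h3
            _ = k * (y m * c) := by ring
        exact hTk.trans (hlow.trans (memv v hv2 hvle))
  refine ⟨hUB, ?_, ?_⟩
  · linarith
  · exact max_le hSle hTle
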